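/- Let g, n ≥ 0 be integers, m = n + g, and let V be a 2m×2m integer matrix such that: (i) the top-left 2n×2n block A of V is Alexander trivial, i.e. det(t·A − Aᵀ) = tⁿ in ℤ[t]; and (ii) V − Vᵀ is the block diagonal matrix (A − Aᵀ) ⊕ J_{2g}. Then for every integer w ≥ 1, the 2wm×2wm matrix S_w(V) is congruent over ℤ to an integer matrix whose top-left 2(wm−g)×2(wm−g) block is Alexander trivial, i.e. has determinant polynomial det(t·X_Δ − X_Δᵀ) = t^{wm−g}. -/

import Mathlib

open Matrix Polynomial

/-- `S_w(V)`: the `wN×wN` block matrix with `(i,j)`-block `V` for `i ≤ j` and `Vᵀ` for `i > j`. -/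
def cableS {R : Type*} [CommRing R] {ι : Type*} (w : ℕ) (V : Matrix ι ι R) :
    Matrix (Fin w × ι) (Fin w × ι) R :=
  Matrix.of fun i j => if i.1 ≤ j.1 then V i.2 j.2 else V j.2 i.2

/-- The Alexander determinant polynomial `det(t·B − Bᵀ)` of an integer square matrix `B`. -/
noncomputable def alexPoly {ι : Type*} [Fintype ι] [DecidableEq ι] (B : Matrix ι ι ℤ) : ℤ[X] :=
  ((X : ℤ[X]) • B.map (fun a : ℤ => (a : ℤ[X]))
    - Bᵀ.map (fun a : ℤ => (a : ℤ[X]))).det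

/-!
Take the basis of `ℤʷ ⊗ ℤ²ᵐ` (vectors `e i x`, `i < w`) formed by all `e i a` with `a` an index of
`A`, the differences `e i p - e (i+1) p` and the vectors `e i q` for `i < w - 1`, where `p` and `q`
run over the two Lagrangian halves of `J`, and finally `e (w-1) p`, `e (w-1) q`. Since
`V - Vᵀ = (A - Aᵀ) ⊕ J`, the Gram matrix of `S_w(V)` on all but the last `2g` vectors is
`[[S_w(A), (0 | B)], [(0 | Bᵀ), [[0, 1], [N, E]]]]` with `N` the nilpotent shift `i ↦ i + 1`, so its
Alexander polynomial is `Δ_{S_w(A)}(t) · det(1 - tN) · det(t - Nᵀ) = Δ_{S_w(A)}(t) · t^((w-1)g)`.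

Finally `Δ_{S_w(A)}(t) = det(A - Aᵀ)^(w-1) · Δ_A(t^w) = t^(nw)`: subtracting the penultimate block
row of the pencil `t S_w(A) - S_w(A)ᵀ` from the last one and then adding `t` times the last block
column to the penultimate one splits off a block `A - Aᵀ` and leaves the same pencil on `w - 1`
blocks, except that its last block column now carries the factor `t²` instead of `t`.
-/

open scoped Kronecker

section BlockDeterminant

variable {R : Type*} [CommRing R] {α κ : Type*} [Fintype α] [DecidableEq α]
  [Fintype κ] [DecidableEq κ]

theorem det_fromBlocks_zero₁₁ (M₁ M₂ M₄ : Matrix κ κ R) :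
    (fromBlocks 0 M₁ M₂ M₄).det = (-M₂).det * M₁.det := by
  have hJ : (fromBlocks 0 1 (-1) 0 : Matrix (κ ⊕ κ) (κ ⊕ κ) R)
      = fromBlocks 1 1 0 1 * fromBlocks 1 0 (-1) 1 * fromBlocks 1 1 0 1 := by
    simp [fromBlocks_multiply]
  have hfactor : fromBlocks 0 M₁ M₂ M₄ = fromBlocks 0 1 (-1) 0 * fromBlocks (-M₂) (-M₄) 0 M₁ := by
    simp [fromBlocks_multiply]
  rw [hfactor, det_mul, hJ, det_mul, det_mul, det_fromBlocks_zero₂₁, det_fromBlocks_zero₁₂,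
    det_fromBlocks_zero₂₁]
  simp

theorem det_fromBlocks_fromCols_zero_fromRows_zero (C : Matrix α α R) (B : Matrix α κ R)
    (Z : Matrix κ α R) (M₁ M₂ M₄ : Matrix κ κ R) (h₂ : IsUnit M₂.det) :
    (fromBlocks C (fromCols 0 B) (fromRows 0 Z) (fromBlocks 0 M₁ M₂ M₄)).det
      = C.det * (fromBlocks 0 M₁ M₂ M₄).det := by
  have hclear : fromBlocks C (fromCols 0 B) (fromRows 0 Z) (fromBlocks 0 M₁ M₂ M₄)
      * fromBlocks 1 0 (fromRows (-(M₂⁻¹ * Z)) 0) 1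
      = fromBlocks C (fromCols 0 B) 0 (fromBlocks 0 M₁ M₂ M₄) := by
    rw [fromBlocks_multiply, fromCols_mul_fromRows, fromBlocks_mul_fromRows]
    simp only [mul_one, Matrix.mul_neg, Matrix.zero_mul, neg_zero, Matrix.mul_zero, add_zero,
      Matrix.mul_one, zero_add, Matrix.mul_nonsing_inv_cancel_left _ _ h₂, fromBlocks_inj,
      and_true, true_and]
    ext (i | i) j <;> simp
  rw [← det_fromBlocks_zero₂₁, ← hclear, det_mul, det_fromBlocks_zero₁₂]
  simp

end BlockDeterminant

section LowerShift

def lowerShift (R : Type*) [Zero R] [One R] (k : ℕ) : Matrix (Fin k) (Fin k) R :=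
  of fun i j => if (i : ℕ) = j + 1 then 1 else 0

variable {R : Type*} [CommRing R]

theorem det_smul_one_sub_lowerShift_transpose (t : R) (k : ℕ) :
    (t • (1 : Matrix (Fin k) (Fin k) R) - (lowerShift R k)ᵀ).det = t ^ k := by
  rw [det_of_isUpperTriangular]
  · simp [lowerShift]
  · intro i j (hji : j < i)
    have hne : i ≠ j := hji.ne'
    have hnsucc : (j : ℕ) ≠ i + 1 := by rw [Fin.lt_def] at hji; omega
    simp [lowerShift, one_apply, hne, hnsucc]

theorem det_one_sub_smul_lowerShift (t : R) (k : ℕ) :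
    (1 - t • lowerShift R k).det = 1 := by
  rw [det_of_isLowerTriangular]
  · simp [lowerShift]
  · intro i j (hij : i < j)
    have hne : i ≠ j := hij.ne
    have hnsucc : (i : ℕ) ≠ j + 1 := by rw [Fin.lt_def] at hij; omega
    simp [lowerShift, one_apply, hne, hnsucc]

variable {γ : Type*} [Fintype γ] [DecidableEq γ]

theorem det_smul_one_sub_lowerShift_kronecker_transpose (t : R) (k : ℕ) :
    (t • (1 : Matrix (Fin k × γ) (Fin k × γ) R) - (lowerShift R k ⊗ₖ 1)ᵀ).det
      = t ^ (k * Fintype.card γ) := by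
  have h : t • (1 : Matrix (Fin k × γ) (Fin k × γ) R) - (lowerShift R k ⊗ₖ 1)ᵀ
      = (t • 1 - (lowerShift R k)ᵀ) ⊗ₖ (1 : Matrix γ γ R) := by
    ext ⟨i, r⟩ ⟨j, s⟩
    by_cases hrs : r = s <;> simp [one_apply, hrs, eq_comm]
  rw [h, det_kronecker, det_smul_one_sub_lowerShift_transpose, det_one, one_pow, mul_one,
    pow_mul]

theorem det_one_sub_smul_lowerShift_kronecker (t : R) (k : ℕ) :
    (1 - t • (lowerShift R k ⊗ₖ (1 : Matrix γ γ R))).det = 1 := by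
  have h : 1 - t • (lowerShift R k ⊗ₖ (1 : Matrix γ γ R))
      = (1 - t • lowerShift R k) ⊗ₖ (1 : Matrix γ γ R) := by
    ext ⟨i, r⟩ ⟨j, s⟩
    by_cases hrs : r = s <;> simp [one_apply, hrs]
  rw [h, det_kronecker, det_one_sub_smul_lowerShift, det_one, one_pow, one_pow, mul_one]

end LowerShift

section GramDeterminant

variable {R : Type*} [CommRing R] {α κ : Type*} [Fintype α] [DecidableEq α]
  [Fintype κ] [DecidableEq κ]

theorem det_smul_fromBlocks_sub_transpose (t : R) (C : Matrix α α R) (B : Matrix α κ R)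
    (Z : Matrix κ α R) (N E : Matrix κ κ R) (hN : IsUnit (1 - t • N).det) :
    (t • fromBlocks C (fromCols 0 B) (fromRows 0 Z) (fromBlocks 0 1 N E)
        - (fromBlocks C (fromCols 0 B) (fromRows 0 Z) (fromBlocks 0 1 N E))ᵀ).det
      = (t • C - Cᵀ).det * (1 - t • N).det * (t • 1 - Nᵀ).det := by
  have hpencil : t • fromBlocks C (fromCols 0 B) (fromRows 0 Z) (fromBlocks 0 1 N E)
        - (fromBlocks C (fromCols 0 B) (fromRows 0 Z) (fromBlocks 0 1 N E))ᵀ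
      = fromBlocks (t • C - Cᵀ) (fromCols 0 (t • B - Zᵀ)) (fromRows 0 (t • Z - Bᵀ))
          (fromBlocks 0 (t • 1 - Nᵀ) (t • N - 1) (t • E - Eᵀ)) := by
    ext (i | i | i) (j | j | j) <;> simp [one_apply, eq_comm]
  have hunit : IsUnit (t • N - 1).det := by
    rwa [← neg_sub, det_neg, IsUnit.mul_iff, and_iff_right ((isUnit_one.neg).pow _)]
  rw [hpencil, det_fromBlocks_fromCols_zero_fromRows_zero _ _ _ _ _ _ hunit,
    det_fromBlocks_zero₁₁, neg_sub, mul_assoc]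

end GramDeterminant

section CablePencil

variable {R : Type*} [CommRing R] {σ : Type*}

def cablePencil (t c : R) (A : Matrix σ σ R) (w : ℕ) :
    Matrix (Fin (w + 1) × σ) (Fin (w + 1) × σ) R :=
  of fun p q => (if q.1 = Fin.last w then c else t) * cableS (w + 1) A p q - cableS (w + 1) A q p

variable (σ) in
def splitLastBlock (w : ℕ) : Fin (w + 2) × σ ≃ (Fin (w + 1) × σ) ⊕ σ where
  toFun p := Fin.lastCases (Sum.inr p.2) (fun i => Sum.inl (i, p.2)) p.1
  invFun := Sum.elim (fun q => (q.1.castSucc, q.2)) (fun a => (Fin.last (w + 1), a))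
  left_inv := by
    rintro ⟨i, a⟩
    induction i using Fin.lastCases <;> simp
  right_inv := by
    rintro (⟨i, a⟩ | a) <;> simp

theorem reindex_cablePencil_succ (t c : R) (A : Matrix σ σ R) (w : ℕ) :
    reindex (splitLastBlock σ w) (splitLastBlock σ w) (cablePencil t c A (w + 1))
      = fromBlocks (cablePencil t t A w) (of fun p b => (c - 1) * A p.2 b)
          (of fun a q => (t - 1) * A q.2 a) (c • A - Aᵀ) := by
  ext (⟨i, a⟩ | a) (⟨j, b⟩ | b) <;>
    simp only [reindex_apply, submatrix_apply, splitLastBlock, Equiv.coe_fn_symm_mk,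
      Sum.elim_inl, Sum.elim_inr, fromBlocks_apply₁₁, fromBlocks_apply₁₂, fromBlocks_apply₂₁,
      fromBlocks_apply₂₂, cablePencil, cableS, of_apply, Fin.ext_iff, Fin.le_iff_val_le_val,
      Fin.val_castSucc, Fin.val_last, Matrix.sub_apply, Matrix.smul_apply, transpose_apply,
      smul_eq_mul] <;>
    split_ifs <;> first | ring1 | omega

variable (σ) in
def lastBlockRow [DecidableEq σ] (w : ℕ) : Matrix σ (Fin (w + 1) × σ) R :=
  of fun a q => if q = (Fin.last w, a) then 1 else 0

variable [Fintype σ] [DecidableEq σ]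

-- Subtract block row `w` from the last block row, then add `t` times the last block column to
-- block column `w`.
theorem cablePencil_succ_eliminate (t c : R) (A : Matrix σ σ R) (w : ℕ) :
    fromBlocks 1 0 (-lastBlockRow σ w) 1
        * reindex (splitLastBlock σ w) (splitLastBlock σ w) (cablePencil t c A (w + 1))
        * fromBlocks 1 0 (t • lastBlockRow σ w) 1
      = fromBlocks (cablePencil t (t * c) A w) (of fun p b => (c - 1) * A p.2 b) 0 (A - Aᵀ) := by
  rw [reindex_cablePencil_succ]
  simp only [fromBlocks_multiply]
  congr 1
  · ext ⟨i, a⟩ ⟨j, b⟩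
    simp only [Matrix.one_mul, Matrix.zero_mul, Matrix.add_apply, add_zero, mul_apply,
      smul_of, of_apply, Pi.smul_apply, smul_eq_mul, cablePencil, cableS, mul_ite, ite_mul,
      mul_one, mul_zero, one_mul, Prod.mk.injEq, ite_and, Finset.sum_ite_irrel,
      Finset.sum_ite_eq, Finset.mem_univ, ite_true, Finset.sum_const_zero, lastBlockRow]
    split_ifs <;> first | ring1 | simp_all [Fin.le_last]
  · simp
  · ext a ⟨j, b⟩
    simp only [Matrix.one_mul, Matrix.mul_one, Matrix.add_apply, Matrix.sub_apply,
      Matrix.smul_apply, Matrix.zero_apply, transpose_apply, mul_apply, neg_of, smul_of, of_apply,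
      Pi.neg_apply, Pi.smul_apply, smul_eq_mul, cablePencil, cableS, mul_ite, ite_mul, neg_mul,
      mul_one, mul_zero, one_mul, zero_mul, neg_sub, Fin.last_le_iff, Prod.mk.injEq, ite_and,
      Finset.sum_neg_distrib, Finset.sum_ite_irrel, Finset.sum_ite_eq, Finset.sum_ite_eq',
      Finset.mem_univ, ite_true, Finset.sum_const_zero, lastBlockRow]
    split_ifs <;> first | ring1 | simp_all [Fin.le_last]
  · ext a b
    simp only [neg_of, Matrix.one_mul, Matrix.mul_zero, Matrix.mul_one, mul_apply, of_apply,
      Pi.neg_apply, neg_mul, ite_mul, one_mul, zero_mul, Finset.sum_neg_distrib,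
      Finset.sum_ite_eq', Finset.mem_univ, ite_true, Matrix.add_apply, Matrix.sub_apply,
      Matrix.smul_apply, smul_eq_mul, transpose_apply, Matrix.zero_apply, zero_add, lastBlockRow]
    ring

theorem det_cablePencil_succ (t c : R) (A : Matrix σ σ R) (w : ℕ) :
    (cablePencil t c A (w + 1)).det = (A - Aᵀ).det * (cablePencil t (t * c) A w).det := by
  have hunipotent : ∀ N : Matrix σ (Fin (w + 1) × σ) R, (fromBlocks 1 0 N 1).det = 1 := by
    intro N
    rw [det_fromBlocks_zero₁₂, det_one, det_one, one_mul]
  calc (cablePencil t c A (w + 1)).det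
      = (fromBlocks 1 0 (-lastBlockRow σ w) 1
          * reindex (splitLastBlock σ w) (splitLastBlock σ w) (cablePencil t c A (w + 1))
          * fromBlocks 1 0 (t • lastBlockRow σ w) 1).det := by
        rw [det_mul, det_mul, hunipotent, hunipotent, one_mul, mul_one, det_reindex_self]
    _ = (A - Aᵀ).det * (cablePencil t (t * c) A w).det := by
        rw [cablePencil_succ_eliminate, det_fromBlocks_zero₂₁, mul_comm]

theorem det_cablePencil_zero (t c : R) (A : Matrix σ σ R) :
    (cablePencil t c A 0).det = (c • A - Aᵀ).det := by
  have h : reindex (Equiv.uniqueProd σ (Fin 1)) (Equiv.uniqueProd σ (Fin 1))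
      (cablePencil t c A 0) = c • A - Aᵀ := by
    ext a b
    simp [cablePencil, cableS]
  rw [← det_reindex_self (Equiv.uniqueProd σ (Fin 1)), h]

theorem det_cablePencil (t c : R) (A : Matrix σ σ R) (w : ℕ) :
    (cablePencil t c A w).det = (A - Aᵀ).det ^ w * ((t ^ w * c) • A - Aᵀ).det := by
  induction w generalizing c with
  | zero => simp [det_cablePencil_zero]
  | succ w ih =>
    rw [det_cablePencil_succ, ih, ← mul_assoc, ← pow_succ', pow_succ t, mul_assoc (t ^ w)]

theorem det_smul_cableS_sub_transpose (t : R) (A : Matrix σ σ R) (w : ℕ) :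
    (t • cableS (w + 1) A - (cableS (w + 1) A)ᵀ).det
      = (A - Aᵀ).det ^ w * (t ^ (w + 1) • A - Aᵀ).det := by
  have h : t • cableS (w + 1) A - (cableS (w + 1) A)ᵀ = cablePencil t t A w := by
    ext p q
    simp [cablePencil]
  rw [h, det_cablePencil, pow_succ]

end CablePencil

section AlexanderPolynomial

variable {ι : Type*} [Fintype ι] [DecidableEq ι]

theorem map_alexPoly {S : Type*} [CommRing S] (φ : ℤ[X] →+* S) (B : Matrix ι ι ℤ) :
    φ (alexPoly B) = (φ X • B.map (Int.cast : ℤ → S) - (B.map (Int.cast : ℤ → S))ᵀ).det := by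
  rw [alexPoly, RingHom.map_det]
  congr 1
  ext i j
  simp

theorem eval_one_alexPoly (B : Matrix ι ι ℤ) : (alexPoly B).eval 1 = (B - Bᵀ).det := by
  have hid : B.map (Int.cast : ℤ → ℤ) = B := by ext; simp
  rw [← coe_evalRingHom, map_alexPoly, hid, coe_evalRingHom, eval_X, one_smul]

theorem alexPoly_reindex {κ : Type*} [Fintype κ] [DecidableEq κ] (e : ι ≃ κ)
    (B : Matrix ι ι ℤ) : alexPoly (reindex e e B) = alexPoly B := by
  rw [alexPoly, alexPoly, ← det_reindex_self e]
  rfl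

omit [Fintype ι] [DecidableEq ι] in
theorem cableS_map {R S : Type*} [CommRing R] [CommRing S] (f : R → S) (w : ℕ)
    (A : Matrix ι ι R) : (cableS w A).map f = cableS w (A.map f) := by
  ext p q
  simp only [cableS, map_apply, of_apply]
  split_ifs <;> rfl

theorem alexPoly_cableS (A : Matrix ι ι ℤ) (w : ℕ) :
    alexPoly (cableS (w + 1) A)
      = ((A - Aᵀ).det : ℤ[X]) ^ w * (alexPoly A).comp (X ^ (w + 1)) := by
  have hcomp := map_alexPoly (compRingHom (X ^ (w + 1))) A
  simp only [coe_compRingHom, X_comp] at hcomp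
  have hΩ := (Int.castRingHom ℤ[X]).map_det (A - Aᵀ)
  rw [eq_intCast, map_sub, RingHom.mapMatrix_apply, RingHom.mapMatrix_apply, transpose_map] at hΩ
  rw [alexPoly, transpose_map, cableS_map, det_smul_cableS_sub_transpose, hcomp, hΩ]
  rfl

theorem alexPoly_cableS_of_eq_X_pow {A : Matrix ι ι ℤ} {n : ℕ} (hA : alexPoly A = X ^ n)
    (w : ℕ) : alexPoly (cableS w A) = X ^ (n * w) := by
  have hΩ : (A - Aᵀ).det = 1 := by simpa [hA] using (eval_one_alexPoly A).symm
  cases w with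
  | zero => simp [alexPoly]
  | succ w => rw [alexPoly_cableS, hΩ, hA]; simp [← pow_mul, mul_comm]

theorem alexPoly_fromBlocks_lowerShift_kronecker {α γ : Type*} [Fintype α] [DecidableEq α]
    [Fintype γ] [DecidableEq γ] {k : ℕ} (C : Matrix α α ℤ) (B : Matrix α (Fin k × γ) ℤ)
    (Z : Matrix (Fin k × γ) α ℤ) (E : Matrix (Fin k × γ) (Fin k × γ) ℤ) :
    alexPoly (fromBlocks C (fromCols 0 B) (fromRows 0 Z)
        (fromBlocks 0 (1 : Matrix (Fin k × γ) _ ℤ) (lowerShift ℤ k ⊗ₖ (1 : Matrix γ γ ℤ)) E))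
      = alexPoly C * X ^ (k * Fintype.card γ) := by
  have hmap : (fromBlocks C (fromCols 0 B) (fromRows 0 Z)
        (fromBlocks 0 (1 : Matrix (Fin k × γ) _ ℤ) (lowerShift ℤ k ⊗ₖ (1 : Matrix γ γ ℤ)) E)).map
          (Int.cast : ℤ → ℤ[X])
      = fromBlocks (C.map Int.cast) (fromCols 0 (B.map Int.cast)) (fromRows 0 (Z.map Int.cast))
          (fromBlocks 0 1 (lowerShift ℤ[X] k ⊗ₖ (1 : Matrix γ γ ℤ[X])) (E.map Int.cast)) := by
    ext (i | ⟨i, r⟩ | ⟨i, r⟩) (j | ⟨j, s⟩ | ⟨j, s⟩) <;>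
      simp [lowerShift, one_apply, apply_ite (Int.cast : ℤ → ℤ[X])]
  rw [alexPoly, transpose_map, hmap, det_smul_fromBlocks_sub_transpose,
    det_one_sub_smul_lowerShift_kronecker, det_smul_one_sub_lowerShift_kronecker_transpose,
    mul_one, alexPoly, transpose_map]
  rw [det_one_sub_smul_lowerShift_kronecker]
  exact isUnit_one

end AlexanderPolynomial

theorem exists_isUnit_det_toBlocks₁₁_eq {R : Type*} [CommRing R]
    {ι β₁ β₂ γ₁ γ₂ : Type*} [Fintype ι] [DecidableEq ι] [Fintype β₁] [DecidableEq β₁]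
    [Fintype β₂] [DecidableEq β₂]
    (S : Matrix ι ι R) (Q₁ : Matrix β₁ ι R) (Q₂ : Matrix β₂ ι R) (Q' : Matrix ι (β₁ ⊕ β₂) R)
    (hQ : fromRows Q₁ Q₂ * Q' = 1) (eι : ι ≃ β₁ ⊕ β₂) (e₁ : β₁ ≃ γ₁) (e₂ : β₂ ≃ γ₂) :
    ∃ (P : Matrix ι ι R) (e : ι ≃ γ₁ ⊕ γ₂), IsUnit P.det ∧
      (reindex e e (P * S * Pᵀ)).toBlocks₁₁ = reindex e₁ e₁ (Q₁ * S * Q₁ᵀ) := by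
  refine ⟨(fromRows Q₁ Q₂).submatrix eι id, eι.trans (Equiv.sumCongr e₁ e₂), ?_, ?_⟩
  · refine isUnit_det_of_right_inverse (B := Q'.submatrix id eι) ?_
    rw [← Equiv.coe_refl, submatrix_mul_equiv, hQ, submatrix_one_equiv]
  · ext a b
    simp [toBlocks₁₁, mul_apply, Finset.sum_mul]

section CableBasis

variable (R : Type*) [CommRing R] (α κ : Type*) [DecidableEq α] [DecidableEq κ] (w : ℕ)

def cableBasisTop :
    Matrix ((Fin (w + 1) × α) ⊕ ((Fin w × κ) ⊕ (Fin w × κ))) (Fin (w + 1) × (α ⊕ (κ ⊕ κ))) R :=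
  of fun x y => match x with
    | Sum.inl (i, a) => if y = (i, Sum.inl a) then 1 else 0
    | Sum.inr (Sum.inl (i, r)) => (if y = (i.castSucc, Sum.inr (Sum.inl r)) then 1 else 0)
        - (if y = (i.succ, Sum.inr (Sum.inl r)) then 1 else 0)
    | Sum.inr (Sum.inr (i, s)) => if y = (i.castSucc, Sum.inr (Sum.inr s)) then 1 else 0

def cableBasisBot : Matrix (κ ⊕ κ) (Fin (w + 1) × (α ⊕ (κ ⊕ κ))) R :=
  of fun x y => if y = (Fin.last w, Sum.inr x) then 1 else 0

def cableBasisInv :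
    Matrix (Fin (w + 1) × (α ⊕ (κ ⊕ κ)))
      (((Fin (w + 1) × α) ⊕ ((Fin w × κ) ⊕ (Fin w × κ))) ⊕ (κ ⊕ κ)) R :=
  of fun y x => match y, x with
    | (j, Sum.inl a), Sum.inl (Sum.inl p) => if p = (j, a) then 1 else 0
    | (j, Sum.inr (Sum.inl r)), Sum.inl (Sum.inr (Sum.inl (i, r'))) =>
        if r' = r ∧ j ≤ i.castSucc then 1 else 0
    | (_, Sum.inr (Sum.inl r)), Sum.inr (Sum.inl r') => if r' = r then 1 else 0
    | (j, Sum.inr (Sum.inr s)), Sum.inl (Sum.inr (Sum.inr (i, s'))) =>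
        if i.castSucc = j ∧ s' = s then 1 else 0
    | (j, Sum.inr (Sum.inr s)), Sum.inr (Sum.inr s') => if j = Fin.last w ∧ s' = s then 1 else 0
    | _, _ => 0

variable {R α κ w} [Fintype α] [Fintype κ]

section
variable {β : Type*} (M : Matrix (Fin (w + 1) × (α ⊕ (κ ⊕ κ))) β R)

@[simp] theorem cableBasisTop_mul_apply_inl (i : Fin (w + 1)) (a : α) (b : β) :
    (cableBasisTop R α κ w * M) (Sum.inl (i, a)) b = M (i, Sum.inl a) b := by
  simp [mul_apply, cableBasisTop]

@[simp] theorem cableBasisTop_mul_apply_inr_inl (i : Fin w) (r : κ) (b : β) :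
    (cableBasisTop R α κ w * M) (Sum.inr (Sum.inl (i, r))) b
      = M (i.castSucc, Sum.inr (Sum.inl r)) b - M (i.succ, Sum.inr (Sum.inl r)) b := by
  simp [mul_apply, cableBasisTop, sub_mul, Finset.sum_sub_distrib]

@[simp] theorem cableBasisTop_mul_apply_inr_inr (i : Fin w) (s : κ) (b : β) :
    (cableBasisTop R α κ w * M) (Sum.inr (Sum.inr (i, s))) b
      = M (i.castSucc, Sum.inr (Sum.inr s)) b := by
  simp [mul_apply, cableBasisTop]

@[simp] theorem cableBasisBot_mul_apply (x : κ ⊕ κ) (b : β) :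
    (cableBasisBot R α κ w * M) x b = M (Fin.last w, Sum.inr x) b := by
  simp [mul_apply, cableBasisBot]

end

theorem fromRows_cableBasisTop_cableBasisBot_mul_cableBasisInv :
    fromRows (cableBasisTop R α κ w) (cableBasisBot R α κ w) * cableBasisInv R α κ w = 1 := by
  ext ((⟨i, a⟩ | ⟨i, r⟩ | ⟨i, s⟩) | (r | s)) ((⟨j, b⟩ | ⟨j, r'⟩ | ⟨j, s'⟩) | (r' | s')) <;>
    simp only [fromRows_mul, fromRows_apply_inl, fromRows_apply_inr, cableBasisTop_mul_apply_inl,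
      cableBasisTop_mul_apply_inr_inl, cableBasisTop_mul_apply_inr_inr, cableBasisBot_mul_apply,
      cableBasisInv, of_apply, one_apply] <;>
    grind

theorem cableBasisTop_mul_cableS_mul_transpose (V : Matrix (α ⊕ (κ ⊕ κ)) (α ⊕ (κ ⊕ κ)) R)
    (hV : V - Vᵀ = fromBlocks (toBlocks₁₁ V - (toBlocks₁₁ V)ᵀ) 0 0 (fromBlocks 0 1 (-1) 0)) :
    cableBasisTop R α κ w * cableS (w + 1) V * (cableBasisTop R α κ w)ᵀ
      = fromBlocks (cableS (w + 1) (toBlocks₁₁ V))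
          (fromCols 0 (of fun x y => V (Sum.inl x.2) (Sum.inr (Sum.inr y.2))))
          (fromRows 0 (of fun y x => V (Sum.inl x.2) (Sum.inr (Sum.inr y.2))))
          (fromBlocks 0 1 (lowerShift R w ⊗ₖ (1 : Matrix κ κ R))
            (of fun x y => V (Sum.inr (Sum.inr x.2)) (Sum.inr (Sum.inr y.2)))) := by
  have hskew : ∀ x y, V x y - V y x
      = fromBlocks (toBlocks₁₁ V - (toBlocks₁₁ V)ᵀ) 0 0 (fromBlocks 0 1 (-1) 0) x y :=
    fun x y => by rw [← hV, Matrix.sub_apply, transpose_apply]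
  have hαp : ∀ a r, V (Sum.inl a) (Sum.inr (Sum.inl r)) = V (Sum.inr (Sum.inl r)) (Sum.inl a) :=
    fun a r => sub_eq_zero.mp (hskew _ _)
  have hαq : ∀ a s, V (Sum.inl a) (Sum.inr (Sum.inr s)) = V (Sum.inr (Sum.inr s)) (Sum.inl a) :=
    fun a s => sub_eq_zero.mp (hskew _ _)
  have hpp : ∀ r r', V (Sum.inr (Sum.inl r)) (Sum.inr (Sum.inl r'))
      = V (Sum.inr (Sum.inl r')) (Sum.inr (Sum.inl r)) := fun r r' => sub_eq_zero.mp (hskew _ _)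
  have hqq : ∀ s s', V (Sum.inr (Sum.inr s)) (Sum.inr (Sum.inr s'))
      = V (Sum.inr (Sum.inr s')) (Sum.inr (Sum.inr s)) := fun s s' => sub_eq_zero.mp (hskew _ _)
  have hpq : ∀ r s, V (Sum.inr (Sum.inl r)) (Sum.inr (Sum.inr s))
      = V (Sum.inr (Sum.inr s)) (Sum.inr (Sum.inl r)) + if r = s then 1 else 0 := by
    intro r s
    rw [← sub_eq_iff_eq_add', hskew]
    simp [one_apply]
  rw [← transpose_transpose (cableBasisTop R α κ w * cableS (w + 1) V), ← transpose_mul]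
  ext (⟨i, a⟩ | ⟨i, r⟩ | ⟨i, s⟩) (⟨j, b⟩ | ⟨j, r'⟩ | ⟨j, s'⟩) <;>
    simp only [transpose_apply, cableBasisTop_mul_apply_inl, cableBasisTop_mul_apply_inr_inl,
      cableBasisTop_mul_apply_inr_inr, cableS, of_apply, fromBlocks_apply₁₁, fromBlocks_apply₁₂,
      fromBlocks_apply₂₁, fromBlocks_apply₂₂, fromCols_apply_inl, fromCols_apply_inr,
      fromRows_apply_inl, fromRows_apply_inr, Matrix.zero_apply, one_apply, kronecker_apply,
      lowerShift, toBlocks₁₁, Fin.le_iff_val_le_val, Fin.ext_iff, Fin.val_castSucc, Fin.val_succ,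
      Prod.mk.injEq]
  · simp only [hαp, ite_self, sub_self]
  · simp only [hαq, ite_self]
  · simp only [hαp, ite_self, sub_self]
  · rw [hpp r' r]
    simp only [ite_self, sub_self]
  · rw [hpq r s']
    split_ifs <;> simp_all <;> omega
  · simp only [hαq, ite_self]
  · rw [hpq r' s]
    split_ifs <;> simp_all <;> omega
  · rw [hqq s' s, ite_self]

end CableBasis

/-- let `m = n + g` and let `V` be a `2m×2m` integer matrix (indexed by
`Fin (2n) ⊕ (Fin g ⊕ Fin g)`) whose top-left `2n×2n` block `A` is Alexander trivial and
such that `V − Vᵀ = (A − Aᵀ) ⊕ J_{2g}` with `J_{2g} = [[0, I_g], [−I_g, 0]]`. Then for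
every `w ≥ 1` the matrix `S_w(V)` is congruent over `ℤ` to a matrix whose top-left
`2(wm−g)×2(wm−g)` block is Alexander trivial. -/
theorem cableS_algebraic_genus (n g w : ℕ) (hw : 1 ≤ w)
    (V : Matrix (Fin (2 * n) ⊕ (Fin g ⊕ Fin g)) (Fin (2 * n) ⊕ (Fin g ⊕ Fin g)) ℤ)
    (hA : alexPoly (Matrix.toBlocks₁₁ V) = (X : ℤ[X]) ^ n)
    (hV : V - Vᵀ = Matrix.fromBlocks
      (Matrix.toBlocks₁₁ V - (Matrix.toBlocks₁₁ V)ᵀ) 0 0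
      (Matrix.fromBlocks 0 1 (-1) 0)) :
    ∃ (P : Matrix (Fin w × (Fin (2 * n) ⊕ (Fin g ⊕ Fin g)))
        (Fin w × (Fin (2 * n) ⊕ (Fin g ⊕ Fin g))) ℤ)
      (e : (Fin w × (Fin (2 * n) ⊕ (Fin g ⊕ Fin g)))
        ≃ (Fin (2 * (w * (n + g) - g)) ⊕ Fin (2 * g))),
      IsUnit P.det ∧
      alexPoly ((Matrix.reindex e e (P * cableS w V * Pᵀ)).toBlocks₁₁)
        = (X : ℤ[X]) ^ (w * (n + g) - g) := by
  obtain ⟨k, rfl⟩ : ∃ k, w = k + 1 := ⟨w - 1, by omega⟩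
  have hrank : (k + 1) * (n + g) - g = n * (k + 1) + k * g := by
    have : (k + 1) * (n + g) = n * (k + 1) + k * g + g := by ring
    omega
  obtain ⟨P, e, hP, hblock⟩ := exists_isUnit_det_toBlocks₁₁_eq (cableS (k + 1) V) _ _ _
    fromRows_cableBasisTop_cableBasisBot_mul_cableBasisInv
    (Fintype.equivOfCardEq (by simp; ring))
    (Fintype.equivFinOfCardEq (n := 2 * ((k + 1) * (n + g) - g)) (by rw [hrank]; simp; ring))
    (Fintype.equivFinOfCardEq (n := 2 * g) (by simp; ring))
  refine ⟨P, e, hP, ?_⟩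
  rw [hblock, alexPoly_reindex, cableBasisTop_mul_cableS_mul_transpose V hV,
    alexPoly_fromBlocks_lowerShift_kronecker, alexPoly_cableS_of_eq_X_pow hA, Fintype.card_fin,
    ← pow_add, hrank]
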